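/- arXiv:1802.00556 — 3 statements merged into one kernel-verified Lean document; each statement's English description precedes it below -/
import Mathlib

section
/- For every odd positive integer v, there exist integers k₂, k₃, k₄ with 0 ≤ k₄ ≤ k₃ ≤ k₂ ≤ (v−1)/2 such that (v − 2k₂)² + (v − 2k₃)² + (v − 2k₄)² = 4v − 1. -/
/-!
Write `4 v - 1 = x² + y² + z²`. Since `4 v - 1 ≡ 3 (mod 4)`, all of `x, y, z` are odd, and each
is at most `v` in absolute value, so after sorting `|x| ≤ |y| ≤ |z|` they are `v - 2 k` with
`0 ≤ k ≤ (v - 1) / 2`.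

That every `N ≡ 3 (mod 8)` is a sum of three squares is proved as by Dirichlet. Choose a prime
`p` with `N ∣ 2 p + 1` (Dirichlet's theorem on primes in progressions) and put `2 p + 1 = N D`.
Quadratic reciprocity makes `-N`, hence `-D`, a square modulo `p`, so `b² + D = 2 p c` for some
`b, c`, and the ternary form with Gram matrix `[[c, -b, 1], [-b, 2p, 0], [1, 0, N]]` is positive
definite of determinant `1` and represents `N`. Such a form is equivalent to `x² + y² + z²`:
bring its minimum `m` to the corner; the binary form `m` times the Schur complement of `m` has
determinant `m`, so by Lagrange–Gauss reduction it has a value `μ` with `3 μ² ≤ 4 m`, while the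
minimality of `m` gives `3 m² ≤ 4 μ`. Hence `m = 1`, and splitting off a square leaves a positive
definite binary form of determinant `1`, which by the same reduction is a sum of two squares.
-/

open Matrix

namespace Matrix

section PosDef

variable {n R : Type*} [Fintype n] [Ring R] [PartialOrder R] [StarRing R] [TrivialStar R]

lemma PosDef.dotProduct_mulVec_self_pos {A : Matrix n n R} (hA : A.PosDef) {x : n → R}
    (hx : x ≠ 0) : 0 < x ⬝ᵥ A *ᵥ x := by
  simpa using hA.dotProduct_mulVec_pos hx

lemma posDef_of_isSymm {B : Matrix n n R} (hB : B.IsSymm) (hpos : ∀ x ≠ 0, 0 < x ⬝ᵥ B *ᵥ x) :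
    B.PosDef :=
  PosDef.of_dotProduct_mulVec_pos (by simpa using hB) (by simpa using hpos)

end PosDef

section Unimodular

variable {n : Type*} [Fintype n]

lemma dotProduct_transpose_mul_mul_mulVec {R : Type*} [CommSemiring R] (A U : Matrix n n R)
    (x : n → R) : x ⬝ᵥ (Uᵀ * A * U) *ᵥ x = (U *ᵥ x) ⬝ᵥ A *ᵥ (U *ᵥ x) := by
  rw [← mulVec_mulVec, ← mulVec_mulVec, dotProduct_mulVec, vecMul_transpose]

variable {A U : Matrix n n ℤ}

/-- If `k` divided every entry of `v`, then `v / k` would take the smaller value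
`v ⬝ᵥ A *ᵥ v / k ^ 2`. -/
lemma PosDef.isUnit_of_forall_dvd_of_forall_le (hA : A.PosDef) {v : n → ℤ} (hv : v ≠ 0)
    (hmin : ∀ x ≠ 0, v ⬝ᵥ A *ᵥ v ≤ x ⬝ᵥ A *ᵥ x) {k : ℤ} (hk : ∀ i, k ∣ v i) : IsUnit k := by
  choose w hw using hk
  have hvw : v = k • w := funext hw
  have hw0 : w ≠ 0 := by rintro rfl; simp [hvw] at hv
  have hk0 : k ≠ 0 := by rintro rfl; simp [hvw] at hv
  have hval : v ⬝ᵥ A *ᵥ v = k ^ 2 * (w ⬝ᵥ A *ᵥ w) := by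
    rw [hvw, mulVec_smul, dotProduct_smul, smul_dotProduct, smul_eq_mul, smul_eq_mul]; ring
  have hk2 : k ^ 2 ≤ 1 := by nlinarith [hmin w hw0, hA.dotProduct_mulVec_self_pos hw0]
  rw [Int.isUnit_iff_abs_eq]
  nlinarith [sq_abs k, abs_pos.mpr hk0]

variable [DecidableEq n]

lemma isUnit_of_det_eq_one (h : U.det = 1) : IsUnit U := by
  rw [isUnit_iff_isUnit_det, h]
  exact isUnit_one

lemma PosDef.transpose_mul_mul (hA : A.PosDef) (hU : IsUnit U) : (Uᵀ * A * U).PosDef := by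
  rw [← conjTranspose_eq_transpose_of_trivial]
  exact hA.conjTranspose_mul_mul_same (mulVec_injective_of_isUnit hU)

lemma det_transpose_mul_mul_of_isUnit (hU : IsUnit U) : (Uᵀ * A * U).det = A.det := by
  have h : U.det ^ 2 = 1 := Int.isUnit_sq ((isUnit_iff_isUnit_det U).mp hU)
  rw [det_mul, det_mul, det_transpose]
  linear_combination A.det * h

lemma exists_dotProduct_transpose_mul_mul_mulVec_eq (hU : IsUnit U) (y : n → ℤ) :
    ∃ x, x ⬝ᵥ (Uᵀ * A * U) *ᵥ x = y ⬝ᵥ A *ᵥ y := by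
  obtain ⟨x, rfl⟩ := mulVec_surjective_iff_isUnit.mpr hU y
  exact ⟨x, dotProduct_transpose_mul_mul_mulVec A U x⟩

lemma transpose_mul_mul_apply_self (A U : Matrix n n ℤ) (i : n) :
    (Uᵀ * A * U) i i = (U *ᵥ Pi.single i 1) ⬝ᵥ A *ᵥ (U *ᵥ Pi.single i 1) := by
  rw [← dotProduct_transpose_mul_mul_mulVec]
  simp

lemma PosDef.exists_forall_le [Nonempty n] (hA : A.PosDef) :
    ∃ v ≠ 0, ∀ x ≠ 0, v ⬝ᵥ A *ᵥ v ≤ x ⬝ᵥ A *ᵥ x := by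
  obtain ⟨i⟩ := ‹Nonempty n›
  obtain ⟨m, ⟨v, hv, rfl⟩, hleast⟩ :=
    Int.exists_least_of_bdd (P := fun m => ∃ x ≠ 0, x ⬝ᵥ A *ᵥ x = m)
      ⟨0, by rintro _ ⟨x, hx, rfl⟩; exact (hA.dotProduct_mulVec_self_pos hx).le⟩
      ⟨_, Pi.single i 1, by simp, rfl⟩
  exact ⟨v, hv, fun x hx => hleast _ ⟨x, hx, rfl⟩⟩

lemma PosDef.exists_isUnit_forall_apply_le [Nonempty n] (hA : A.PosDef) (i : n)
    (hext : ∀ v : n → ℤ, (∀ k : ℤ, (∀ j, k ∣ v j) → IsUnit k) →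
      ∃ U : Matrix n n ℤ, IsUnit U ∧ U *ᵥ Pi.single i 1 = v) :
    ∃ U : Matrix n n ℤ, IsUnit U ∧ ∀ x ≠ 0, (Uᵀ * A * U) i i ≤ x ⬝ᵥ (Uᵀ * A * U) *ᵥ x := by
  obtain ⟨v, hv, hmin⟩ := hA.exists_forall_le
  obtain ⟨U, hU, hUv⟩ := hext v fun k => hA.isUnit_of_forall_dvd_of_forall_le hv hmin
  refine ⟨U, hU, fun x hx => ?_⟩
  rw [transpose_mul_mul_apply_self, hUv, dotProduct_transpose_mul_mul_mulVec]
  exact hmin _ fun h => hx (mulVec_injective_of_isUnit hU (h.trans (mulVec_zero U).symm))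

end Unimodular

lemma exists_isUnit_mulVec_single_zero_fin_two (v : Fin 2 → ℤ)
    (hv : ∀ k : ℤ, (∀ j, k ∣ v j) → IsUnit k) :
    ∃ U : Matrix (Fin 2) (Fin 2) ℤ, IsUnit U ∧ U *ᵥ Pi.single 0 1 = v := by
  have hgcd := Int.isUnit_iff_natAbs_eq.mp <| hv (Int.gcd (v 0) (v 1)) fun j => by
    fin_cases j
    exacts [Int.gcd_dvd_left _ _, Int.gcd_dvd_right _ _]
  obtain ⟨a, b, hab⟩ := Int.isCoprime_iff_gcd_eq_one.mpr (by simpa using hgcd)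
  refine ⟨!![v 0, -b; v 1, a], isUnit_of_det_eq_one ?_, ?_⟩
  · rw [det_fin_two_of]
    linear_combination hab
  · ext j
    fin_cases j <;> simp [mulVec, dotProduct, Fin.sum_univ_two]

lemma exists_isUnit_mulVec_single_zero_fin_three (v : Fin 3 → ℤ)
    (hv : ∀ k : ℤ, (∀ j, k ∣ v j) → IsUnit k) :
    ∃ U : Matrix (Fin 3) (Fin 3) ℤ, IsUnit U ∧ U *ᵥ Pi.single 0 1 = v := by
  obtain ⟨g, x, y, hxy, hx, hy⟩ : ∃ g x y : ℤ, IsCoprime x y ∧ v 0 = g * x ∧ v 1 = g * y := by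
    by_cases h : Int.gcd (v 0) (v 1) = 0
    · rw [Int.gcd_eq_zero_iff] at h
      exact ⟨0, 1, 0, isCoprime_one_left, by simp [h.1], by simp [h.2]⟩
    · obtain ⟨g, x, y, -, hxy, h0, h1⟩ := Int.exists_gcd_one' (Nat.pos_of_ne_zero h)
      exact ⟨g, x, y, Int.isCoprime_iff_gcd_eq_one.mpr hxy, by rw [h0, mul_comm],
        by rw [h1, mul_comm]⟩
  have hgcd := Int.isUnit_iff_natAbs_eq.mp <| hv (Int.gcd g (v 2)) fun j => by
    fin_cases j
    · exact (Int.gcd_dvd_left _ _).trans (hx ▸ dvd_mul_right g x)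
    · exact (Int.gcd_dvd_left _ _).trans (hy ▸ dvd_mul_right g y)
    · exact Int.gcd_dvd_right _ _
  obtain ⟨u, w, huw⟩ := Int.isCoprime_iff_gcd_eq_one.mpr (by simpa using hgcd)
  obtain ⟨a, b, hab⟩ := hxy
  refine ⟨!![v 0, -b, -w * x; v 1, a, -w * y; v 2, 0, u], isUnit_of_det_eq_one ?_, ?_⟩
  · simp only [det_fin_three, of_apply, cons_val', cons_val_zero, cons_val_one, cons_val_two,
      empty_val', cons_val_fin_one, head_cons, tail_cons, head_fin_const, hx, hy]
    linear_combination (u * g + w * v 2) * hab + huw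
  · ext j
    fin_cases j <;> simp [mulVec, dotProduct, Fin.sum_univ_three]

section SmallDimension

variable {R : Type*} [CommRing R]

lemma IsSymm.dotProduct_mulVec_fin_two {B : Matrix (Fin 2) (Fin 2) R} (hB : B.IsSymm)
    (x : Fin 2 → R) :
    x ⬝ᵥ B *ᵥ x = B 0 0 * x 0 ^ 2 + 2 * B 0 1 * x 0 * x 1 + B 1 1 * x 1 ^ 2 := by
  simp only [dotProduct, mulVec, Fin.sum_univ_two, hB.apply 0 1]
  ring

lemma IsSymm.dotProduct_mulVec_fin_three {B : Matrix (Fin 3) (Fin 3) R} (hB : B.IsSymm)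
    (x : Fin 3 → R) :
    x ⬝ᵥ B *ᵥ x = B 0 0 * x 0 ^ 2 + B 1 1 * x 1 ^ 2 + B 2 2 * x 2 ^ 2 + 2 * B 0 1 * x 0 * x 1
      + 2 * B 0 2 * x 0 * x 2 + 2 * B 1 2 * x 1 * x 2 := by
  simp only [dotProduct, mulVec, Fin.sum_univ_three, hB.apply 0 1, hB.apply 0 2, hB.apply 1 2]
  ring

lemma IsSymm.det_fin_two {B : Matrix (Fin 2) (Fin 2) R} (hB : B.IsSymm) :
    B.det = B 0 0 * B 1 1 - B 0 1 ^ 2 := by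
  rw [Matrix.det_fin_two, hB.apply 0 1]
  ring

/-- `B 0 0` times the Schur complement of the pivot `B 0 0`; unlike the Schur complement itself,
it has entries in `R`. -/
def scaledSchurComplement {n : ℕ} (B : Matrix (Fin (n + 1)) (Fin (n + 1)) R) :
    Matrix (Fin n) (Fin n) R :=
  of fun i j => B 0 0 * B i.succ j.succ - B 0 i.succ * B 0 j.succ

lemma IsSymm.scaledSchurComplement {n : ℕ} {B : Matrix (Fin (n + 1)) (Fin (n + 1)) R}
    (hB : B.IsSymm) : B.scaledSchurComplement.IsSymm := by
  ext i j
  simp only [transpose_apply, Matrix.scaledSchurComplement, of_apply, hB.apply i.succ j.succ]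
  ring

variable {B : Matrix (Fin 3) (Fin 3) R}

lemma IsSymm.mul_dotProduct_mulVec_fin_three (hB : B.IsSymm) (x : Fin 3 → R) :
    B 0 0 * (x ⬝ᵥ B *ᵥ x) = (B 0 0 * x 0 + B 0 1 * x 1 + B 0 2 * x 2) ^ 2
      + Fin.tail x ⬝ᵥ B.scaledSchurComplement *ᵥ Fin.tail x := by
  rw [hB.dotProduct_mulVec_fin_three, hB.scaledSchurComplement.dotProduct_mulVec_fin_two]
  simp only [Matrix.scaledSchurComplement, of_apply, Fin.tail, Fin.succ_zero_eq_one,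
    Fin.succ_one_eq_two]
  ring

lemma IsSymm.det_scaledSchurComplement_fin_three (hB : B.IsSymm) :
    B.scaledSchurComplement.det = B 0 0 * B.det := by
  simp only [Matrix.det_fin_two, det_fin_three, Matrix.scaledSchurComplement, of_apply,
    Fin.succ_zero_eq_one, Fin.succ_one_eq_two, hB.apply 0 1, hB.apply 0 2, hB.apply 1 2]
  ring

end SmallDimension

section Sylvester

variable {R : Type*} [CommRing R] [LinearOrder R] [IsStrictOrderedRing R] [StarRing R]
  [TrivialStar R]

lemma posDef_fin_two_of {B : Matrix (Fin 2) (Fin 2) R} (hB : B.IsSymm) (h0 : 0 < B 0 0)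
    (hdet : 0 < B.det) : B.PosDef := by
  refine posDef_of_isSymm hB fun x hx => pos_of_mul_pos_right ?_ h0.le
  have key : B 0 0 * (x ⬝ᵥ B *ᵥ x) = (B 0 0 * x 0 + B 0 1 * x 1) ^ 2 + B.det * x 1 ^ 2 := by
    rw [hB.dotProduct_mulVec_fin_two, hB.det_fin_two]
    ring
  rw [key]
  by_cases h1 : x 1 = 0
  · have h0' : x 0 ≠ 0 := fun h0' => hx (funext fun i => by fin_cases i <;> assumption)
    rw [h1]
    simp only [mul_zero, add_zero, ne_eq, OfNat.ofNat_ne_zero, not_false_eq_true, zero_pow]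
    positivity
  · positivity

lemma posDef_fin_three_of {B : Matrix (Fin 3) (Fin 3) R} (hB : B.IsSymm) (h0 : 0 < B 0 0)
    (h1 : 0 < B 0 0 * B 1 1 - B 0 1 ^ 2) (hdet : 0 < B.det) : B.PosDef := by
  have hS : B.scaledSchurComplement.PosDef := by
    refine posDef_fin_two_of hB.scaledSchurComplement ?_ ?_
    · simpa [Matrix.scaledSchurComplement, sq] using h1
    · rw [hB.det_scaledSchurComplement_fin_three]
      positivity
  refine posDef_of_isSymm hB fun x hx => pos_of_mul_pos_right ?_ h0.le
  rw [hB.mul_dotProduct_mulVec_fin_three]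
  by_cases htail : Fin.tail x = 0
  · have h1 : x 1 = 0 := congrFun htail 0
    have h2 : x 2 = 0 := congrFun htail 1
    have h0' : x 0 ≠ 0 := fun h0' => hx (funext fun i => by fin_cases i <;> assumption)
    rw [htail, h1, h2]
    simp only [mul_zero, add_zero, mulVec_zero, dotProduct_zero]
    positivity
  · exact add_pos_of_nonneg_of_pos (sq_nonneg _) (hS.dotProduct_mulVec_self_pos htail)

lemma PosDef.scaledSchurComplement {B : Matrix (Fin 3) (Fin 3) R} (hB : B.PosDef) :
    B.scaledSchurComplement.PosDef := by
  have hBs : B.IsSymm := by simpa using hB.1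
  have h0 : 0 < B 0 0 := hB.diag_pos
  refine posDef_of_isSymm hBs.scaledSchurComplement fun y hy => ?_
  let x : Fin 3 → R := ![-(B 0 1 * y 0 + B 0 2 * y 1), B 0 0 * y 0, B 0 0 * y 1]
  have htail : Fin.tail x = B 0 0 • y := by
    ext i
    fin_cases i <;> simp [x, Fin.tail]
  have hx : x ≠ 0 := fun h => hy <|
    (smul_eq_zero.mp (htail.symm.trans (by rw [h]; rfl))).resolve_left h0.ne'
  have hfirst : B 0 0 * x 0 + B 0 1 * x 1 + B 0 2 * x 2 = 0 := by
    simp only [x, cons_val_zero, cons_val_one, cons_val]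
    ring
  have hpos := mul_pos h0 (hB.dotProduct_mulVec_self_pos hx)
  rw [hBs.mul_dotProduct_mulVec_fin_three, htail, hfirst, mulVec_smul, dotProduct_smul,
    smul_dotProduct, smul_eq_mul, smul_eq_mul, zero_pow two_ne_zero, zero_add] at hpos
  exact pos_of_mul_pos_right (pos_of_mul_pos_right hpos h0.le) h0.le

end Sylvester

end Matrix

lemma exists_four_mul_sq_sub_mul_le_sq (c : ℤ) {a : ℤ} (ha : 0 < a) :
    ∃ t : ℤ, 4 * (c - a * t) ^ 2 ≤ a ^ 2 := by
  obtain ⟨t, r, hr0, hra, rfl⟩ : ∃ t r : ℤ, 0 ≤ r ∧ r < a ∧ c = a * t + r :=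
    ⟨c / a, c % a, Int.emod_nonneg c ha.ne', Int.emod_lt_of_pos c ha,
      (Int.mul_ediv_add_emod c a).symm⟩
  rcases le_or_gt (2 * r) a with h | h
  · exact ⟨t, by nlinarith⟩
  · exact ⟨t + 1, by nlinarith⟩

lemma eq_one_of_three_mul_sq_le_four_mul {m μ : ℤ} (hm : 0 < m) (hmμ : 3 * m ^ 2 ≤ 4 * μ)
    (hμm : 3 * μ ^ 2 ≤ 4 * m) : m = 1 := by
  have hsq : (3 * m ^ 2) ^ 2 ≤ (4 * μ) ^ 2 := pow_le_pow_left₀ (by positivity) hmμ 2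
  have h4 : 27 * m ^ 4 ≤ 64 * m := by nlinarith
  by_contra hne
  have h2 : 2 ≤ m := by omega
  nlinarith [pow_le_pow_left₀ (by norm_num) h2 3]

namespace Matrix

lemma three_mul_sq_le_four_mul_det_of_forall_le {B : Matrix (Fin 2) (Fin 2) ℤ} (hB : B.IsSymm)
    (h0 : 0 < B 0 0) (hmin : ∀ x ≠ 0, B 0 0 ≤ x ⬝ᵥ B *ᵥ x) : 3 * B 0 0 ^ 2 ≤ 4 * B.det := by
  obtain ⟨t, ht⟩ := exists_four_mul_sq_sub_mul_le_sq (B 0 1) h0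
  have hle := hmin ![-t, 1] fun h => by simpa using congrFun h 1
  rw [hB.dotProduct_mulVec_fin_two] at hle
  simp only [cons_val_zero, cons_val_one] at hle
  rw [hB.det_fin_two]
  nlinarith [mul_le_mul_of_nonneg_left hle h0.le]

namespace PosDef

section Binary

variable {A : Matrix (Fin 2) (Fin 2) ℤ}

lemma exists_isUnit_three_mul_sq_le_four_mul_det (hA : A.PosDef) :
    ∃ U : Matrix (Fin 2) (Fin 2) ℤ, IsUnit U ∧ 3 * (Uᵀ * A * U) 0 0 ^ 2 ≤ 4 * A.det := by
  obtain ⟨U, hU, hmin⟩ :=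
    hA.exists_isUnit_forall_apply_le 0 exists_isUnit_mulVec_single_zero_fin_two
  have hB := hA.transpose_mul_mul hU
  refine ⟨U, hU, ?_⟩
  rw [← det_transpose_mul_mul_of_isUnit (A := A) hU]
  exact three_mul_sq_le_four_mul_det_of_forall_le (by simpa using hB.1) hB.diag_pos hmin

theorem exists_ne_zero_three_mul_sq_le_four_mul_det (hA : A.PosDef) :
    ∃ x ≠ 0, 3 * (x ⬝ᵥ A *ᵥ x) ^ 2 ≤ 4 * A.det := by
  obtain ⟨U, hU, hle⟩ := hA.exists_isUnit_three_mul_sq_le_four_mul_det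
  refine ⟨U *ᵥ Pi.single 0 1, fun h => ?_, by rwa [← transpose_mul_mul_apply_self]⟩
  exact one_ne_zero (congrFun (mulVec_injective_of_isUnit hU (h.trans (mulVec_zero U).symm)) 0)

theorem exists_sq_add_sq_of_det_eq_one (hA : A.PosDef) (hdet : A.det = 1) (x : Fin 2 → ℤ) :
    ∃ r s : ℤ, x ⬝ᵥ A *ᵥ x = r ^ 2 + s ^ 2 := by
  obtain ⟨U, hU, hle⟩ := hA.exists_isUnit_three_mul_sq_le_four_mul_det
  set B := Uᵀ * A * U
  have hB := hA.transpose_mul_mul hU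
  have hBs : B.IsSymm := by simpa using hB.1
  have h00 : B 0 0 = 1 := by nlinarith [hB.diag_pos (i := 0)]
  have hBdet : B 0 0 * B 1 1 - B 0 1 ^ 2 = 1 := by
    rw [← hBs.det_fin_two, det_transpose_mul_mul_of_isUnit hU, hdet]
  rw [h00, one_mul] at hBdet
  obtain ⟨y, hy⟩ := exists_dotProduct_transpose_mul_mul_mulVec_eq (A := A) hU x
  refine ⟨y 0 + B 0 1 * y 1, y 1, ?_⟩
  rw [← hy, hBs.dotProduct_mulVec_fin_two, h00]
  linear_combination y 1 ^ 2 * hBdet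

end Binary

section Ternary

variable {B : Matrix (Fin 3) (Fin 3) ℤ}

/-- `B.scaledSchurComplement` has determinant `B 0 0`, so it takes a value `μ` with
`3 μ² ≤ 4 B 0 0`; completing its argument to the nearest point of `ℤ³` gives `3 (B 0 0)² ≤ 4 μ`
by the minimality of `B 0 0`. -/
lemma apply_zero_zero_eq_one_of_forall_le (hB : B.PosDef) (hdet : B.det = 1)
    (hmin : ∀ x ≠ 0, B 0 0 ≤ x ⬝ᵥ B *ᵥ x) : B 0 0 = 1 := by
  have hBs : B.IsSymm := by simpa using hB.1
  have h0 : 0 < B 0 0 := hB.diag_pos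
  obtain ⟨y, hy, hμ⟩ := hB.scaledSchurComplement.exists_ne_zero_three_mul_sq_le_four_mul_det
  rw [hBs.det_scaledSchurComplement_fin_three, hdet, mul_one] at hμ
  refine eq_one_of_three_mul_sq_le_four_mul h0 ?_ hμ
  obtain ⟨t, ht⟩ := exists_four_mul_sq_sub_mul_le_sq (B 0 1 * y 0 + B 0 2 * y 1) h0
  let x : Fin 3 → ℤ := ![-t, y 0, y 1]
  have htail : Fin.tail x = y := by
    ext i
    fin_cases i <;> rfl
  have hx : x ≠ 0 := fun h => hy (htail.symm.trans (by rw [h]; rfl))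
  have hfirst : B 0 0 * x 0 + B 0 1 * x 1 + B 0 2 * x 2
      = B 0 1 * y 0 + B 0 2 * y 1 - B 0 0 * t := by
    simp only [x, cons_val_zero, cons_val_one, cons_val]
    ring
  have key := hBs.mul_dotProduct_mulVec_fin_three x
  rw [htail, hfirst] at key
  nlinarith [mul_le_mul_of_nonneg_left (hmin x hx) h0.le]

lemma exists_sum_three_sq_of_apply_zero_zero_eq_one (hB : B.PosDef) (hdet : B.det = 1)
    (h00 : B 0 0 = 1) (x : Fin 3 → ℤ) : ∃ r s t : ℤ, x ⬝ᵥ B *ᵥ x = r ^ 2 + s ^ 2 + t ^ 2 := by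
  have hBs : B.IsSymm := by simpa using hB.1
  obtain ⟨s, t, hst⟩ := hB.scaledSchurComplement.exists_sq_add_sq_of_det_eq_one
    (by rw [hBs.det_scaledSchurComplement_fin_three, hdet, h00, mul_one]) (Fin.tail x)
  refine ⟨x 0 + B 0 1 * x 1 + B 0 2 * x 2, s, t, ?_⟩
  have key := hBs.mul_dotProduct_mulVec_fin_three x
  rw [h00, one_mul, one_mul, hst] at key
  rw [key]
  ring

theorem exists_sum_three_sq_of_det_eq_one {A : Matrix (Fin 3) (Fin 3) ℤ} (hA : A.PosDef)
    (hdet : A.det = 1) (x : Fin 3 → ℤ) : ∃ r s t : ℤ, x ⬝ᵥ A *ᵥ x = r ^ 2 + s ^ 2 + t ^ 2 := by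
  obtain ⟨U, hU, hmin⟩ :=
    hA.exists_isUnit_forall_apply_le 0 exists_isUnit_mulVec_single_zero_fin_three
  have hB := hA.transpose_mul_mul hU
  have hBdet : (Uᵀ * A * U).det = 1 := by rw [det_transpose_mul_mul_of_isUnit hU, hdet]
  obtain ⟨y, hy⟩ := exists_dotProduct_transpose_mul_mul_mulVec_eq (A := A) hU x
  rw [← hy]
  exact hB.exists_sum_three_sq_of_apply_zero_zero_eq_one hBdet
    (hB.apply_zero_zero_eq_one_of_forall_le hBdet hmin) y

end Ternary

end PosDef

end Matrix

lemma exists_prime_gt_dvd_two_mul_add_one {N : ℕ} (hN : Odd N) (n : ℕ) :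
    ∃ p > n, p.Prime ∧ N ∣ 2 * p + 1 := by
  obtain ⟨r, rfl⟩ := hN
  have hunit : IsUnit (r : ZMod (2 * r + 1)) := by
    rw [ZMod.isUnit_iff_coprime, Nat.coprime_mul_right_add_right]
    exact Nat.coprime_one_right r
  obtain ⟨p, hpn, hp, hpr⟩ := Nat.forall_exists_prime_gt_and_eq_mod hunit n
  refine ⟨p, hpn, hp, (ZMod.natCast_eq_zero_iff _ _).mp ?_⟩
  push_cast
  rw [hpr]
  exact_mod_cast ZMod.natCast_self (2 * r + 1)

lemma jacobiSym_neg_eq_one {N p : ℕ} (hN : N % 8 = 3) (hp : Odd p) (hdvd : N ∣ 2 * p + 1) :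
    jacobiSym (-N) p = 1 := by
  have hNodd : Odd N := Nat.odd_iff.mpr (by omega)
  have hpN : jacobiSym p N = 1 := by
    have h2p : jacobiSym (2 * p) N = jacobiSym (-1) N := by
      refine jacobiSym.mod_left' (Int.modEq_iff_dvd.mpr ?_)
      rw [show (-1 : ℤ) - 2 * p = -((2 * p + 1 : ℕ) : ℤ) by push_cast; ring, dvd_neg]
      exact Int.natCast_dvd_natCast.mpr hdvd
    rw [jacobiSym.mul_left, jacobiSym.at_two hNodd, jacobiSym.at_neg_one hNodd,
      ZMod.χ₈_nat_eq_if_mod_eight, ZMod.χ₄_nat_eq_if_mod_four] at h2p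
    simp only [show N % 2 ≠ 0 by omega, show N % 4 ≠ 1 by omega, hN] at h2p
    simpa using h2p
  rw [jacobiSym.neg _ hp, jacobiSym.quadratic_reciprocity hNodd hp, hpN, mul_one, pow_mul,
    Odd.neg_one_pow (Nat.odd_iff.mpr (by omega)), ZMod.χ₄_eq_neg_one_pow (Nat.odd_iff.mp hp),
    ← pow_add, Even.neg_one_pow ⟨_, rfl⟩]

lemma exists_sq_add_eq_two_mul_mul {p : ℕ} (hp : Odd p) {D : ℤ}
    (hD : IsSquare ((-D : ℤ) : ZMod p)) : ∃ b c : ℤ, b ^ 2 + D = 2 * p * c := by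
  obtain ⟨σ, hσ⟩ := hD
  set b₀ : ℤ := ZMod.cast σ
  have hb₀ : (p : ℤ) ∣ b₀ ^ 2 + D := by
    rw [← ZMod.intCast_zmod_eq_zero_iff_dvd]
    push_cast
    rw [ZMod.intCast_zmod_cast, sq, ← hσ]
    push_cast
    ring
  -- replacing `b₀` by `b₀ + p` changes the parity of `b₀ ^ 2 + D`
  obtain ⟨b, hbp, hb2⟩ : ∃ b : ℤ, (p : ℤ) ∣ b ^ 2 + D ∧ Even (b ^ 2 + D) := by
    rcases Int.even_or_odd (b₀ ^ 2 + D) with h | h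
    · exact ⟨b₀, hb₀, h⟩
    · have hpZ : Odd (p : ℤ) := (Int.odd_coe_nat p).mpr hp
      have hshift : (b₀ + p) ^ 2 + D = b₀ ^ 2 + D + p * (2 * b₀ + p) := by ring
      refine ⟨b₀ + p, hshift ▸ dvd_add hb₀ (dvd_mul_right _ _), hshift ▸ h.add_odd ?_⟩
      exact hpZ.mul ((even_two_mul b₀).add_odd hpZ)
  have hcop : IsCoprime (2 : ℤ) p := by
    exact_mod_cast Nat.isCoprime_iff_coprime.mpr (Nat.coprime_two_left.mpr hp)
  obtain ⟨c, hc⟩ := hcop.mul_dvd (even_iff_two_dvd.mp hb2) hbp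
  exact ⟨b, c, hc⟩

/-- When `b ^ 2 + D = 2 p c` and `N D = 2 p + 1`, its determinant is `N (2 p c - b²) - 2 p = 1`;
its last diagonal entry is `N`. -/
def threeSquaresGram (p N b c : ℤ) : Matrix (Fin 3) (Fin 3) ℤ :=
  !![c, -b, 1; -b, 2 * p, 0; 1, 0, N]

section threeSquaresGram

variable {p N D b c : ℤ}

lemma det_threeSquaresGram (hND : N * D = 2 * p + 1) (hbc : b ^ 2 + D = 2 * p * c) :
    (threeSquaresGram p N b c).det = 1 := by
  simp only [threeSquaresGram, det_fin_three, of_apply, cons_val', cons_val_zero, cons_val_one,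
    cons_val_two, empty_val', cons_val_fin_one, head_cons, tail_cons, head_fin_const]
  linear_combination hND - N * hbc

lemma posDef_threeSquaresGram (hp : 0 < p) (hD : 0 < D) (hND : N * D = 2 * p + 1)
    (hbc : b ^ 2 + D = 2 * p * c) : (threeSquaresGram p N b c).PosDef := by
  have hc : 0 < c := by nlinarith [sq_nonneg b]
  refine posDef_fin_three_of ?_ hc ?_ (by rw [det_threeSquaresGram hND hbc]; exact one_pos)
  · ext i j
    fin_cases i <;> fin_cases j <;> rfl
  · simp only [threeSquaresGram, of_apply, cons_val', cons_val_zero, cons_val_fin_one,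
      cons_val_one, even_two, Even.neg_pow]
    linarith

end threeSquaresGram

theorem exists_sum_three_sq_of_mod_eight_eq_three {N : ℕ} (hN : N % 8 = 3) :
    ∃ r s t : ℤ, (N : ℤ) = r ^ 2 + s ^ 2 + t ^ 2 := by
  obtain ⟨p, hp2, hp, D, hD⟩ :=
    exists_prime_gt_dvd_two_mul_add_one (Nat.odd_iff.mpr (by omega : N % 2 = 1)) 2
  have hpodd : Odd p := hp.odd_of_ne_two (by omega)
  have : Fact p.Prime := ⟨hp⟩
  have hsqD : IsSquare ((-D : ℤ) : ZMod p) := by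
    obtain ⟨s, hs⟩ := ZMod.isSquare_of_jacobiSym_eq_one (jacobiSym_neg_eq_one hN hpodd ⟨D, hD⟩)
    have hND : (N : ZMod p) * D = 1 := by
      have h := congrArg (Nat.cast : ℕ → ZMod p) hD
      push_cast [ZMod.natCast_self] at h
      rw [← h]
      ring
    refine ⟨s * D, ?_⟩
    push_cast at hs ⊢
    linear_combination (D : ZMod p) * hND + (D : ZMod p) ^ 2 * hs
  obtain ⟨b, c, hbc⟩ := exists_sq_add_eq_two_mul_mul hpodd hsqD
  have hND : (N : ℤ) * D = 2 * p + 1 := by exact_mod_cast hD.symm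
  have hDpos : (0 : ℤ) < D := by
    have : 0 < D := Nat.pos_of_ne_zero (by rintro rfl; omega)
    exact_mod_cast this
  obtain ⟨r, s, t, h⟩ := (posDef_threeSquaresGram (by exact_mod_cast hp.pos) hDpos hND hbc)
    |>.exists_sum_three_sq_of_det_eq_one (det_threeSquaresGram hND hbc) (Pi.single 2 1)
  exact ⟨r, s, t, by simpa [threeSquaresGram] using h⟩

lemma odd_of_sq_add_sq_add_sq_emod_four_eq_three {x y z : ℤ}
    (h : (x ^ 2 + y ^ 2 + z ^ 2) % 4 = 3) : Odd x ∧ Odd y ∧ Odd z := by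
  have hsq : ∀ u : ℤ, (Even u ∧ u ^ 2 % 4 = 0) ∨ (Odd u ∧ u ^ 2 % 4 = 1) := fun u => by
    rcases Int.even_or_odd u with ⟨k, rfl⟩ | hu
    · exact .inl ⟨⟨k, rfl⟩, by rw [show (k + k) ^ 2 = 4 * k ^ 2 by ring, Int.mul_emod_right]⟩
    · exact .inr ⟨hu, Int.sq_mod_four_eq_one_of_odd hu⟩
  rcases hsq x with ⟨-, hx⟩ | ⟨hx', hx⟩ <;> rcases hsq y with ⟨-, hy⟩ | ⟨hy', hy⟩ <;>
    rcases hsq z with ⟨-, hz⟩ | ⟨hz', hz⟩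
  all_goals first
    | exact ⟨hx', hy', hz'⟩
    | (generalize x ^ 2 = X at *; generalize y ^ 2 = Y at *; generalize z ^ 2 = Z at *; omega)

lemma exists_sorted_of_sq_add_sq_add_sq {n : ℤ} (h : ∃ x y z : ℤ, x ^ 2 + y ^ 2 + z ^ 2 = n) :
    ∃ x y z : ℤ, 0 ≤ x ∧ x ≤ y ∧ y ≤ z ∧ x ^ 2 + y ^ 2 + z ^ 2 = n := by
  obtain ⟨x, y, z, rfl⟩ := h
  rw [← sq_abs x, ← sq_abs y, ← sq_abs z]
  rcases le_total |x| |y| with hxy | hxy <;> rcases le_total |y| |z| with hyz | hyz <;>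
    rcases le_total |x| |z| with hxz | hxz
  all_goals first
    | exact ⟨|x|, |y|, |z|, abs_nonneg _, hxy, hyz, by ring⟩
    | exact ⟨|x|, |z|, |y|, abs_nonneg _, hxz, hyz, by ring⟩
    | exact ⟨|y|, |x|, |z|, abs_nonneg _, hxy, hxz, by ring⟩
    | exact ⟨|y|, |z|, |x|, abs_nonneg _, hyz, hxz, by ring⟩
    | exact ⟨|z|, |x|, |y|, abs_nonneg _, hxz, hxy, by ring⟩
    | exact ⟨|z|, |y|, |x|, abs_nonneg _, hyz, hxy, by ring⟩

theorem gs_ksss_params_exist (v : ℤ) (hv : 0 < v) (hodd : Odd v) :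
    ∃ k2 k3 k4 : ℤ, 0 ≤ k4 ∧ k4 ≤ k3 ∧ k3 ≤ k2 ∧ k2 ≤ (v - 1) / 2 ∧
      (v - 2 * k2) ^ 2 + (v - 2 * k3) ^ 2 + (v - 2 * k4) ^ 2 = 4 * v - 1 := by
  obtain ⟨w, rfl⟩ := hodd
  obtain ⟨N, hN⟩ : ∃ N : ℕ, (N : ℤ) = 4 * (2 * w + 1) - 1 :=
    ⟨_, Int.toNat_of_nonneg (by omega)⟩
  obtain ⟨r, s, t, hrst⟩ := exists_sum_three_sq_of_mod_eight_eq_three (N := N) (by omega)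
  obtain ⟨x, y, z, hx, hxy, hyz, hsum⟩ :=
    exists_sorted_of_sq_add_sq_add_sq ⟨r, s, t, hrst.symm.trans hN⟩
  obtain ⟨⟨a, rfl⟩, ⟨b, rfl⟩, ⟨c, rfl⟩⟩ :=
    odd_of_sq_add_sq_add_sq_emod_four_eq_three (by rw [hsum]; omega)
  have hcw : c ≤ w := by nlinarith
  exact ⟨w - a, w - b, w - c, by omega, by omega, by omega, by omega, by rw [← hsum]; ring⟩
end

section
/- Let v ≥ 3 be an odd integer. There exist integers k₃, k₄, λ with (v−1)/2 ≥ k₃ ≥ k₄ ≥ 0 and λ ≥ 0 such that (v; (v−1)/2, (v−1)/2, k₃, k₄; λ) satisfies both ∑ᵢ kᵢ(kᵢ−1) = λ(v−1) and ∑ᵢ kᵢ = λ + v, if and only if 2v − 1 is a sum of two squares. -/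
/-! Write `v = 2m + 1`. The second condition forces `λ = k₃ + k₄ - 1`, and then the first one is
equivalent to `(v - k₃ - k₄)² + (k₃ - k₄)² = 2v - 1`. Conversely, a representation
`2v - 1 = r² + s²` with `r > s ≥ 0` (strict since `r + s` is odd) gives `k₃ = (v - r + s)/2` and
`k₄ = (v - r - s)/2`; the bounds `r ≤ 2m` and `r + s ≤ 2m + 1` needed for `λ ≥ 0` and `k₄ ≥ 0`
follow from `r² + s² = 4m + 1`. -/

lemma exists_sq_add_sq_eq_of_nonneg_of_le {R : Type*} [Ring R] [LinearOrder R] [IsOrderedRing R]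
    (r s : R) : ∃ a b : R, 0 ≤ b ∧ b ≤ a ∧ a ^ 2 + b ^ 2 = r ^ 2 + s ^ 2 := by
  refine ⟨max |r| |s|, min |r| |s|, le_min (abs_nonneg r) (abs_nonneg s), min_le_max, ?_⟩
  rcases le_total |r| |s| with h | h <;> simp [h, sq_abs, add_comm]

lemma Int.odd_add_of_odd_sq_add_sq {a b : ℤ} (h : Odd (a ^ 2 + b ^ 2)) : Odd (a + b) := by
  simpa [parity_simps] using h

lemma sq_add_sq_eq_iff_gs_count (m k3 k4 : ℤ) :
    (2 * m + 1 - k3 - k4) ^ 2 + (k3 - k4) ^ 2 = 2 * (2 * m + 1) - 1 ↔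
      2 * (m * (m - 1)) + k3 * (k3 - 1) + k4 * (k4 - 1) = (k3 + k4 - 1) * (2 * m) := by
  constructor <;> intro h <;> linarith

lemma exists_gs_params_of_sq_add_sq {m a b : ℤ} (hm : 1 ≤ m) (hb : 0 ≤ b) (hba : b ≤ a)
    (h : a ^ 2 + b ^ 2 = 2 * (2 * m + 1) - 1) :
    ∃ k3 k4 lam : ℤ, m ≥ k3 ∧ k3 ≥ k4 ∧ k4 ≥ 0 ∧ lam ≥ 0 ∧
      2 * (m * (m - 1)) + k3 * (k3 - 1) + k4 * (k4 - 1) = lam * (2 * m) ∧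
      m + m + k3 + k4 = lam + (2 * m + 1) := by
  obtain ⟨t, ht⟩ : Odd (a + b) := Int.odd_add_of_odd_sq_add_sq ⟨2 * m, by omega⟩
  have ha_le : a ≤ 2 * m := by nlinarith
  have hab_lt : a + b < 2 * m + 3 := by nlinarith [sq_nonneg (a - b)]
  refine ⟨m - t + b, m - t, 2 * m - a, by omega, by omega, by omega, by omega, ?_, by omega⟩
  have hcount := (sq_add_sq_eq_iff_gs_count m (m - t + b) (m - t)).1
    (by convert h using 3 <;> omega)
  rwa [show m - t + b + (m - t) - 1 = 2 * m - a by omega] at hcount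

theorem gs_kkss_params_iff (v : ℤ) (hv : 3 ≤ v) (hodd : Odd v) :
    (∃ k3 k4 lam : ℤ, (v - 1) / 2 ≥ k3 ∧ k3 ≥ k4 ∧ k4 ≥ 0 ∧ lam ≥ 0 ∧
        2 * ((v - 1) / 2 * ((v - 1) / 2 - 1)) + k3 * (k3 - 1) + k4 * (k4 - 1)
          = lam * (v - 1) ∧
        (v - 1) / 2 + (v - 1) / 2 + k3 + k4 = lam + v) ↔
      ∃ r s : ℤ, r ^ 2 + s ^ 2 = 2 * v - 1 := by
  obtain ⟨m, rfl⟩ := hodd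
  rw [show (2 * m + 1 - 1) / 2 = m by omega, add_sub_cancel_right]
  constructor
  · rintro ⟨k3, k4, lam, -, -, -, -, hcount, hsum⟩
    obtain rfl : lam = k3 + k4 - 1 := by omega
    exact ⟨_, _, (sq_add_sq_eq_iff_gs_count m k3 k4).2 hcount⟩
  · rintro ⟨r, s, hrs⟩
    obtain ⟨a, b, hb, hba, hab⟩ := exists_sq_add_sq_eq_of_nonneg_of_le r s
    exact exists_gs_params_of_sq_add_sq (by omega) hb hba (hab.trans hrs)
end

section
/- Let A₁, A₂, A₃, A₄ be circulant {±1}-matrices of order v satisfying ∑ᵢ₌₁⁴ AᵢᵀAᵢ = 4v·I_v, and let R be the back-circulant identity matrix of order v (R_{i,j} = 1 iff i + j ≡ v − 1 mod v, else 0). Then the 4v × 4v Goethals–Seidel array H with block rows (A₁, A₂R, A₃R, A₄R), (−A₂R, A₁, −A₄ᵀR, A₃ᵀR), (−A₃R, A₄ᵀR, A₁, −A₂ᵀR), (−A₄R, −A₃ᵀR, A₂ᵀR, A₁) satisfies H·Hᵀ = 4v·I_{4v}, i.e. H is a Hadamard matrix of order 4v. -/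
/-!
Circulant matrices commute with each other and with their transposes, and the back-identity `R`
is a symmetric involution with `R C R = Cᵀ` for every circulant `C`. In any ring with involution,
these relations alone make the off-diagonal blocks of `H Hᴴ` for the Goethals–Seidel array cancel
in pairs and its diagonal blocks equal `∑ Aᵢᴴ Aᵢ`.
-/

open Matrix

section GoethalsSeidelArray

variable {S : Type*} [Ring S] [StarRing S]

def goethalsSeidelArray (a : Fin 4 → S) (r : S) : Matrix (Fin 4) (Fin 4) S :=
  of ![![a 0, a 1 * r, a 2 * r, a 3 * r],
       ![-(a 1 * r), a 0, -(star (a 3) * r), star (a 2) * r],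
       ![-(a 2 * r), star (a 3) * r, a 0, -(star (a 1) * r)],
       ![-(a 3 * r), -(star (a 2) * r), star (a 1) * r, a 0]]

theorem goethalsSeidelArray_mul_conjTranspose {a : Fin 4 → S} {r : S}
    (ha : ∀ i j, Commute (a i) (a j)) (ha_star : ∀ i j, Commute (a i) (star (a j)))
    (hr : IsSelfAdjoint r) (hrr : r * r = 1) (hra : ∀ i, r * a i = star (a i) * r) :
    goethalsSeidelArray a r * (goethalsSeidelArray a r)ᴴ =
      diagonal fun _ => ∑ i, star (a i) * a i := by
  have hra_star (i : Fin 4) : r * star (a i) = a i * r := by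
    have h : r * star (a i) * r = a i := by rw [mul_assoc, ← hra, ← mul_assoc, hrr, one_mul]
    calc r * star (a i) = r * star (a i) * r * r := by rw [mul_assoc _ r r, hrr, mul_one]
      _ = a i * r := by rw [h]
  -- Rewrite rules moving `r` to the right and sorting the commuting factors.
  have hrax (i : Fin 4) (x : S) : r * (a i * x) = star (a i) * (r * x) := by
    rw [← mul_assoc, hra, mul_assoc]
  have hrax_star (i : Fin 4) (x : S) : r * (star (a i) * x) = a i * (r * x) := by
    rw [← mul_assoc, hra_star, mul_assoc]
  have hss (i j : Fin 4) : Commute (star (a i)) (star (a j)) := (ha i j).star_star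
  have hleft (i j : Fin 4) (x : S) := (ha i j).left_comm x
  have hleft_star (i j : Fin 4) (x : S) := (ha_star i j).left_comm x
  ext i j
  fin_cases i <;> fin_cases j <;>
    simp only [goethalsSeidelArray, mul_apply, Fin.sum_univ_four, conjTranspose_apply, of_apply,
      diagonal_apply, Fin.isValue, Fin.reduceFinMk, Fin.zero_eta, Fin.mk_one, cons_val',
      cons_val_zero, cons_val_fin_one, cons_val, cons_val_one, Fin.reduceEq, ↓reduceIte,
      star_neg, star_mul, mul_neg, neg_mul, neg_neg, star_star] <;>
    simp only [hr.star_eq, mul_assoc, hra, hra_star, hrax, hrax_star, hrr, mul_one,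
      fun i j => (ha i j).eq, hleft, fun i j => (ha_star i j).eq, hleft_star,
      fun i j => (hss i j).eq] <;>
    abel

end GoethalsSeidelArray

namespace Matrix

variable {n α : Type*} [AddCommGroup n] [DecidableEq n]

def backIdentity [Zero α] [One α] (s : n) : Matrix n n α :=
  of fun i j => if i + j = s then 1 else 0

section Semiring

variable [Semiring α]

theorem backIdentity_apply (s i j : n) :
    (backIdentity s : Matrix n n α) i j = if j = s - i then 1 else 0 := by
  simp only [backIdentity, of_apply, eq_sub_iff_add_eq']

theorem transpose_backIdentity (s : n) : (backIdentity s : Matrix n n α)ᵀ = backIdentity s := by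
  ext i j
  simp only [backIdentity, transpose_apply, of_apply, add_comm j i]

variable [Fintype n]

theorem backIdentity_mul_self (s : n) :
    (backIdentity s : Matrix n n α) * backIdentity s = 1 := by
  ext i j
  simp only [mul_apply, backIdentity_apply, ite_mul, one_mul, zero_mul, Finset.sum_ite_eq',
    Finset.mem_univ, if_true, sub_sub_cancel, one_apply, eq_comm]

theorem backIdentity_mul_circulant (s : n) (c : n → α) :
    backIdentity s * circulant c = (circulant c)ᵀ * backIdentity s := by
  have hflip (j k : n) : j = s - k ↔ k = s - j := by
    constructor <;> rintro rfl <;> abel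
  ext i j
  simp only [mul_apply, backIdentity_apply, hflip j, circulant_apply, transpose_apply, ite_mul,
    mul_ite, one_mul, zero_mul, mul_one, mul_zero, Finset.sum_ite_eq', Finset.mem_univ, if_true,
    sub_right_comm]

end Semiring

theorem comp_mul_transpose_comp {I J : Type*} [Fintype I] [Fintype J]
    [NonUnitalNonAssocSemiring α] [Star α] [TrivialStar α]
    (M : Matrix I I (Matrix J J α)) :
    comp I I J J α M * (comp I I J J α M)ᵀ = comp I I J J α (M * Mᴴ) := by
  rw [transpose_comp, ← compRingEquiv_apply, ← compRingEquiv_apply, ← compRingEquiv_apply,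
    ← map_mul]
  congr 2
  ext i j : 2
  simp [conjTranspose_apply]

end Matrix

theorem goethals_seidel_hadamard (v : ℕ) [NeZero v]
    (A : Fin 4 → Matrix (ZMod v) (ZMod v) ℤ)
    (hcirc : ∀ i, ∃ x : ZMod v → ℤ, (∀ j, x j = 1 ∨ x j = -1) ∧
      A i = Matrix.of fun a b => x (b - a))
    (hsum : ∑ i, (A i)ᵀ * A i = (4 * (v : ℤ)) • (1 : Matrix (ZMod v) (ZMod v) ℤ))
    (R : Matrix (ZMod v) (ZMod v) ℤ)
    (hR : R = Matrix.of fun i j => if i + j = (v : ZMod v) - 1 then (1 : ℤ) else 0)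
    (B : Fin 4 → Fin 4 → Matrix (ZMod v) (ZMod v) ℤ)
    (hB : B = ![![A 0, A 1 * R, A 2 * R, A 3 * R],
                ![-(A 1 * R), A 0, -((A 3)ᵀ * R), (A 2)ᵀ * R],
                ![-(A 2 * R), (A 3)ᵀ * R, A 0, -((A 1)ᵀ * R)],
                ![-(A 3 * R), -((A 2)ᵀ * R), (A 1)ᵀ * R, A 0]])
    (H : Matrix (Fin 4 × ZMod v) (Fin 4 × ZMod v) ℤ)
    (hH : H = Matrix.of fun p q => B p.1 q.1 p.2 q.2) :
    H * Hᵀ = (4 * (v : ℤ)) • (1 : Matrix (Fin 4 × ZMod v) (Fin 4 × ZMod v) ℤ) := by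
  have hstar (M : Matrix (ZMod v) (ZMod v) ℤ) : star M = Mᵀ := by
    rw [star_eq_conjTranspose, conjTranspose_eq_transpose_of_trivial]
  obtain ⟨c, hc⟩ : ∃ c : Fin 4 → ZMod v → ℤ, ∀ i, A i = circulant (c i) := by
    choose x hx using hcirc
    exact ⟨fun i t => x i (-t), fun i => by ext a b; simp [(hx i).2, circulant_apply]⟩
  have hR' : R = backIdentity (v - 1 : ZMod v) := hR
  have hH' : H = comp (Fin 4) (Fin 4) (ZMod v) (ZMod v) ℤ (goethalsSeidelArray A R) := by
    rw [hH, hB]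
    simp only [goethalsSeidelArray, hstar]
    rfl
  have hcomm (i j : Fin 4) : Commute (A i) (A j) := by
    rw [hc, hc]; exact circulant_mul_comm _ _
  have hcomm_star (i j : Fin 4) : Commute (A i) (star (A j)) := by
    rw [hc, hc, star_eq_conjTranspose, conjTranspose_circulant]; exact circulant_mul_comm _ _
  have hR_self : IsSelfAdjoint R := by
    rw [IsSelfAdjoint, hstar, hR', transpose_backIdentity]
  have hRA (i : Fin 4) : R * A i = star (A i) * R := by
    rw [hstar, hR', hc, backIdentity_mul_circulant]
  rw [hH', comp_mul_transpose_comp, goethalsSeidelArray_mul_conjTranspose hcomm hcomm_star hR_self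
    (by rw [hR', backIdentity_mul_self]) hRA]
  simp only [hstar, hsum, smul_one_eq_diagonal, comp_diagonal_diagonal]
end
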